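/- A subset F ⊆ 𝒮 is a facet (maximal face) of Δ(I) if and only if there exists a monomial x_1^{a_1}⋯x_n^{a_n} ∈ Mon(S∖I) such that F = 𝒮 ∖ {x_{1,a_1+1}, …, x_{n,a_n+1}}. -/

import Mathlib

open MvPolynomial

noncomputable section

/-- The vertex set / variable set `𝒮` of the polarized ring `S^℘`: pairs `⟨i, j⟩` with
`1 ≤ i ≤ n`, `1 ≤ j ≤ b i`.  Here `j : Fin (b i)` encodes the paper's second index `j + 1`,
so the vertex `⟨i, j⟩` stands for the variable `x_{i, j+1}` of the paper. -/
abbrev PolVars (m : ℕ) (b : Fin m → ℕ) := Σ i : Fin m, Fin (b i)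

/-- `I` is a monomial ideal, i.e. generated by monomials. -/
def IsMonomialIdeal {K : Type} [Field K] {m : ℕ} (I : Ideal (MvPolynomial (Fin m) K)) : Prop :=
  ∃ A : Set (Fin m →₀ ℕ), I = Ideal.span ((fun c => (monomial c (1 : K))) '' A)

/-- The exponent vectors of the minimal monomial generators of a monomial ideal:
the exponent vectors of monomials of `I` that are minimal under divisibility. -/
def MinGens (K : Type) [Field K] {m : ℕ} (I : Ideal (MvPolynomial (Fin m) K)) :
    Set (Fin m →₀ ℕ) :=
  {c | (monomial c (1 : K)) ∈ I ∧ ∀ c' : Fin m →₀ ℕ, c' ≤ c → c' ≠ c →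
      (monomial c' (1 : K)) ∉ I}

/-- The polarization `v^℘ = ∏_{i=1}^n ∏_{j=1}^{c_i} x_{i,j}` of the monomial `v = x^c`. -/
def polMon (K : Type) [Field K] {m : ℕ} (b : Fin m → ℕ) (c : Fin m →₀ ℕ) :
    MvPolynomial (PolVars m b) K :=
  ∏ v ∈ Finset.univ.filter (fun v : PolVars m b => (v.2 : ℕ) < c v.1), X v

/-- The polarization `I^℘ ⊆ S^℘` of the monomial ideal `I`, generated by the
polarizations of the minimal monomial generators of `I`. -/
def polarIdeal (K : Type) [Field K] {m : ℕ} (b : Fin m → ℕ)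
    (I : Ideal (MvPolynomial (Fin m) K)) : Ideal (MvPolynomial (PolVars m b) K) :=
  Ideal.span (polMon K b '' MinGens K I)

/-- The squarefree monomial `x_{1,a_1+1} ⋯ x_{n,a_n+1} ∈ S^℘` associated with the
exponent vector `a` of a monomial `x^a ∈ Mon(S∖I)`. -/
def genL (K : Type) [Field K] {m : ℕ} (b : Fin m → ℕ) (a : Fin m →₀ ℕ) :
    MvPolynomial (PolVars m b) K :=
  ∏ v ∈ Finset.univ.filter (fun v : PolVars m b => (v.2 : ℕ) = a v.1), X v

/-- The ideal `L(I) ⊆ S^℘`, generated by the monomials `x_{1,a_1+1} ⋯ x_{n,a_n+1}`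
with `x^a ∈ Mon(S∖I)`. -/
def LIdeal (K : Type) [Field K] {m : ℕ} (b : Fin m → ℕ)
    (I : Ideal (MvPolynomial (Fin m) K)) : Ideal (MvPolynomial (PolVars m b) K) :=
  Ideal.span (genL K b '' {a | (monomial a (1 : K)) ∉ I})

/-- The monomial prime ideal `φ(x^a) = (x_{1,a_1+1}, …, x_{n,a_n+1}) ⊆ S^℘`. -/
def phiIdeal (K : Type) [Field K] {m : ℕ} (b : Fin m → ℕ) (a : Fin m →₀ ℕ) :
    Ideal (MvPolynomial (PolVars m b) K) :=
  Ideal.span ((fun v => (X v : MvPolynomial (PolVars m b) K)) ''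
    {v : PolVars m b | (v.2 : ℕ) = a v.1})

/-- The set of faces of the simplicial complex `Δ(I)` on the vertex set `𝒮`, whose
Stanley–Reisner ideal is `I^℘`: a finite set `F` of vertices is a face iff the
squarefree monomial `∏_{v ∈ F} v` does not belong to `I^℘`. -/
def facesDelta (K : Type) [Field K] {m : ℕ} (b : Fin m → ℕ)
    (I : Ideal (MvPolynomial (Fin m) K)) : Set (Finset (PolVars m b)) :=
  {F | (∏ v ∈ F, (X v : MvPolynomial (PolVars m b) K)) ∉ polarIdeal K b I}

/-- `F` is a facet (maximal face) of the simplicial complex (set of faces) `Δ`. -/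
def IsFacetOf {V : Type} (Δ : Set (Finset V)) (F : Finset V) : Prop :=
  F ∈ Δ ∧ ∀ G ∈ Δ, F ⊆ G → F = G

/-- Zero-dimensionality data for a monomial ideal: `I` is a proper monomial ideal and,
for each `i`, `b i ≥ 1` is the smallest positive integer with `x_i^{b i} ∈ I`
(equivalently, `dim S/I = 0` with the `b i` minimal). -/
def ZeroDimData (K : Type) [Field K] {m : ℕ} (b : Fin m → ℕ)
    (I : Ideal (MvPolynomial (Fin m) K)) : Prop :=
  IsMonomialIdeal I ∧ I ≠ ⊤ ∧ ∀ i : Fin m, 1 ≤ b i ∧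
    (monomial (Finsupp.single i (b i)) (1 : K)) ∈ I ∧
    ∀ j : ℕ, j < b i → (monomial (Finsupp.single i j) (1 : K)) ∉ I

/-- The deletion `del_Δ(v) = {G ∈ Δ : v ∉ G}`. -/
def delC {V : Type} (Δ : Set (Finset V)) (v : V) : Set (Finset V) :=
  {G ∈ Δ | v ∉ G}

/-- The link `link_Δ(v) = {G ∈ Δ : v ∉ G and G ∪ {v} ∈ Δ}`. -/
def linkC {V : Type} [DecidableEq V] (Δ : Set (Finset V)) (v : V) : Set (Finset V) :=
  {G ∈ Δ | v ∉ G ∧ insert v G ∈ Δ}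

/-- Vertex decomposability of a simplicial complex (given as its set of faces):
`Δ` is vertex decomposable if it is a simplex, or it contains a vertex `v` such that
(i) every facet of `del_Δ(v)` is a facet of `Δ` (`v` is a shedding vertex), and
(ii) both `del_Δ(v)` and `link_Δ(v)` are vertex decomposable. -/
inductive IsVertexDecomposable {V : Type} [DecidableEq V] : Set (Finset V) → Prop
  | simplex (F : Finset V) : IsVertexDecomposable {G | G ⊆ F}
  | shed (Δ : Set (Finset V)) (v : V) (hv : {v} ∈ Δ)
      (hshed : ∀ F : Finset V, IsFacetOf (delC Δ v) F → IsFacetOf Δ F)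
      (hdel : IsVertexDecomposable (delC Δ v))
      (hlink : IsVertexDecomposable (linkC Δ v)) : IsVertexDecomposable Δ

/-- The vertex map replacing `x_{i₀,j}` by `x_{i₀,j-1}` and fixing all other vertices. -/
def shiftDown {m : ℕ} {b : Fin m → ℕ} (i₀ : Fin m) (v : PolVars m b) : PolVars m b :=
  ⟨v.1, ⟨(v.2 : ℕ) - (if v.1 = i₀ then 1 else 0),
    Nat.lt_of_le_of_lt (Nat.sub_le _ _) v.2.isLt⟩⟩

/-- `set(u)` for a generator `u = genL a` of `L(I)` with respect to the order `r`:
the set of variables `x` of `S^℘` such that `x·u` lies in the ideal generated by the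
generators of `L(I)` preceding `u`. -/
def setOfGen (K : Type) [Field K] {m : ℕ} (b : Fin m → ℕ)
    (I : Ideal (MvPolynomial (Fin m) K))
    (r : (Fin m →₀ ℕ) → (Fin m →₀ ℕ) → Prop) (a : Fin m →₀ ℕ) : Set (PolVars m b) :=
  {v | ∃ a' : Fin m →₀ ℕ, (monomial a' (1 : K)) ∉ I ∧ r a' a ∧ a' ≠ a ∧
      genL K b a' ∣ X v * genL K b a}

/-- `J(u,i)`: the weakly increasing sequence of the second indices of the variables
`x_{i,·}` dividing the monomial with exponent vector `e` (counted with multiplicity). -/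
def rowList {m : ℕ} {b : Fin m → ℕ} (e : PolVars m b →₀ ℕ) (i : Fin m) : List ℕ :=
  Multiset.sort (∑ j : Fin (b i), Multiset.replicate (e ⟨i, j⟩) (j : ℕ)) (· ≤ ·)

/-- Lexicographic (weak) order on sequences of natural numbers. -/
def lexLE (l l' : List ℕ) : Prop := l = l' ∨ List.Lex (· < ·) l l'

/-- The exponent vectors of the (minimal) monomial generators of `L(I)^k`:
products of `k` generators of `L(I)`. -/
def GLkE (K : Type) [Field K] {m : ℕ} (b : Fin m → ℕ)
    (I : Ideal (MvPolynomial (Fin m) K)) (k : ℕ) : Set (PolVars m b →₀ ℕ) :=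
  {e | ∃ f : Fin k → (Fin m →₀ ℕ), (∀ j, (monomial (f j) (1 : K)) ∉ I) ∧
      (monomial e (1 : K) : MvPolynomial (PolVars m b) K) = ∏ j, genL K b (f j)}

/-- The depth of a module `M` with respect to the ideal `J`: the maximal length of an
`M`-regular sequence consisting of elements of `J`. -/
def myDepth (R : Type) [CommRing R] (J : Ideal R) (M : Type) [AddCommGroup M]
    [Module R M] : ℕ :=
  sSup {k : ℕ | ∃ rs : List R, rs.length = k ∧ (∀ r ∈ rs, r ∈ J) ∧
      RingTheory.Sequence.IsRegular M rs}

/-- `max{deg lcm(u_1, …, u_k) : u_1, …, u_k ∈ Mon(S∖I)}`; the degree of the lcm of the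
monomials `x^{f 1}, …, x^{f k}` is `∑_i max_j (f j) i`. -/
def maxLcmDeg (K : Type) [Field K] {m : ℕ} (I : Ideal (MvPolynomial (Fin m) K))
    (k : ℕ) : ℕ :=
  sSup {d : ℕ | ∃ f : Fin k → (Fin m →₀ ℕ), (∀ j, (monomial (f j) (1 : K)) ∉ I) ∧
      d = ∑ i : Fin m, Finset.univ.sup (fun j => (f j) i)}

/-! Every face `F` of `Δ(I)` lies in `𝒮 ∖ {x_{1,a_1+1}, …, x_{n,a_n+1}}`, where `x_{i,a_i+1}` is
the first variable of row `i` missing from `F`: the rows of `F` then contain the polarization of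
`x^a`, so `x^a ∉ I`. Conversely each such set with `x^a ∉ I` is a face, and these sets form an
antichain under inclusion (each omits exactly one vertex per row), so they are exactly the facets. -/

section SquarefreeMonomials

variable {σ R : Type*} [CommSemiring R]

theorem MvPolynomial.prod_X_eq_monomial (F : Finset σ) :
    (∏ v ∈ F, X v : MvPolynomial σ R) = monomial (∑ v ∈ F, Finsupp.single v 1) 1 :=
  (monomial_sum_one F _).symm

theorem Finset.sum_single_one_le_iff [DecidableEq σ] {F G : Finset σ} :
    ∑ v ∈ F, Finsupp.single v 1 ≤ ∑ v ∈ G, Finsupp.single v 1 ↔ F ⊆ G := by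
  have happly (F : Finset σ) (w : σ) :
      (∑ v ∈ F, Finsupp.single v 1 : σ →₀ ℕ) w = if w ∈ F then 1 else 0 := by
    simp [Finsupp.finsetSum_apply, Finsupp.single_apply]
  simp only [Finsupp.le_def, happly]
  refine ⟨fun h v hv => ?_, fun h v => ?_⟩
  · by_contra hvG
    simpa [hv, hvG] using h v
  · by_cases hv : v ∈ F
    · simp [hv, h hv]
    · simp [hv]

theorem MvPolynomial.prod_X_mem_span_prod_X_iff [Nontrivial R] (F : Finset σ)
    (s : Set (Finset σ)) :
    (∏ v ∈ F, X v : MvPolynomial σ R) ∈ Ideal.span ((fun G => ∏ v ∈ G, X v) '' s) ↔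
      ∃ G ∈ s, G ⊆ F := by
  classical
  have hgens : ((fun G => ∏ v ∈ G, X v) '' s : Set (MvPolynomial σ R)) =
      (fun e => monomial e 1) '' ((fun G => ∑ v ∈ G, Finsupp.single v 1) '' s) := by
    rw [Set.image_image]
    simp only [prod_X_eq_monomial]
  rw [hgens, prod_X_eq_monomial, mem_ideal_span_monomial_image,
    support_monomial, if_neg one_ne_zero]
  simp [Finset.sum_single_one_le_iff]

end SquarefreeMonomials

theorem IsFacetOf.iff_mem_of_isAntichain {V : Type} {Δ 𝒜 : Set (Finset V)}
    (h𝒜Δ : 𝒜 ⊆ Δ) (hcover : ∀ G ∈ Δ, ∃ A ∈ 𝒜, G ⊆ A) (hanti : IsAntichain (· ⊆ ·) 𝒜)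
    {F : Finset V} : IsFacetOf Δ F ↔ F ∈ 𝒜 := by
  constructor
  · rintro ⟨hF, hmax⟩
    obtain ⟨A, hA, hFA⟩ := hcover F hF
    rwa [hmax A (h𝒜Δ hA) hFA]
  · intro hF
    refine ⟨h𝒜Δ hF, fun G hG hFG => ?_⟩
    obtain ⟨A, hA, hGA⟩ := hcover G hG
    have hFA : F = A := hanti.eq hF hA (hFG.trans hGA)
    exact hFG.antisymm (hFA ▸ hGA)

section MonomialIdeals

variable {K : Type} [Field K] {m : ℕ} {I : Ideal (MvPolynomial (Fin m) K)}

theorem monomial_mem_of_le {c d : Fin m →₀ ℕ} (hcd : c ≤ d) (hc : monomial c (1 : K) ∈ I) :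
    monomial d (1 : K) ∈ I :=
  I.mem_of_dvd (monomial_dvd_monomial.mpr ⟨Or.inr hcd, one_dvd _⟩) hc

theorem exists_mem_minGens_le {d : Fin m →₀ ℕ} (hd : monomial d (1 : K) ∈ I) :
    ∃ c ∈ MinGens K I, c ≤ d := by
  obtain ⟨c, ⟨hcd, hc⟩, hmin⟩ :=
    wellFounded_lt.has_min {c | c ≤ d ∧ monomial c (1 : K) ∈ I} ⟨d, le_rfl, hd⟩
  exact ⟨c, ⟨hc, fun c' hc'c hne hc' => hmin c' ⟨hc'c.trans hcd, hc'⟩ (hc'c.lt_of_ne hne)⟩, hcd⟩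

theorem lt_of_monomial_notMem {b : Fin m → ℕ} {a : Fin m →₀ ℕ} (i : Fin m)
    (hb : monomial (Finsupp.single i (b i)) (1 : K) ∈ I) (ha : monomial a (1 : K) ∉ I) :
    a i < b i := by
  by_contra! h
  exact ha (monomial_mem_of_le (Finsupp.single_le_iff.mpr h) hb)

end MonomialIdeals

section Polarization

variable {m : ℕ} (b : Fin m → ℕ)

def polarSupport (c : Fin m →₀ ℕ) : Finset (PolVars m b) :=
  Finset.univ.filter (fun v : PolVars m b => (v.2 : ℕ) < c v.1)

def verticesExcept (a : Fin m →₀ ℕ) : Finset (PolVars m b) :=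
  Finset.univ.filter (fun v : PolVars m b => (v.2 : ℕ) ≠ a v.1)

variable {b}

theorem polarSupport_mono {c d : Fin m →₀ ℕ} (hcd : c ≤ d) :
    polarSupport b c ⊆ polarSupport b d :=
  Finset.monotone_filter_right _ fun v _ hv => hv.trans_le (hcd v.1)

theorem eq_of_verticesExcept_subset {a a' : Fin m →₀ ℕ} (ha' : ∀ i, a' i < b i)
    (h : verticesExcept b a ⊆ verticesExcept b a') : a' = a := by
  ext i
  by_contra hne
  have hv : (⟨i, ⟨a' i, ha' i⟩⟩ : PolVars m b) ∈ verticesExcept b a := by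
    simp [verticesExcept, hne]
  simpa [verticesExcept] using h hv

variable {K : Type} [Field K] {I : Ideal (MvPolynomial (Fin m) K)}

theorem mem_facesDelta_iff {F : Finset (PolVars m b)} :
    F ∈ facesDelta K b I ↔ ∀ c, monomial c (1 : K) ∈ I → ¬ polarSupport b c ⊆ F := by
  have hgens : polMon K b '' MinGens K I =
      (fun G => ∏ v ∈ G, X v) '' (polarSupport b '' MinGens K I) := by
    rw [Set.image_image]
    rfl
  rw [facesDelta, Set.mem_ofPred_eq, polarIdeal, hgens, prod_X_mem_span_prod_X_iff]
  simp only [Set.exists_mem_image, not_exists, not_and]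
  refine ⟨fun h d hd hdF => ?_, fun h c hc => h c hc.1⟩
  obtain ⟨c, hc, hcd⟩ := exists_mem_minGens_le hd
  exact h c hc ((polarSupport_mono hcd).trans hdF)

variable (hb : ∀ i, monomial (Finsupp.single i (b i)) (1 : K) ∈ I)
include hb

theorem verticesExcept_mem_facesDelta {a : Fin m →₀ ℕ} (ha : monomial a (1 : K) ∉ I) :
    verticesExcept b a ∈ facesDelta K b I := by
  refine mem_facesDelta_iff.mpr fun c hc hsub => ha (monomial_mem_of_le (fun i => ?_) hc)
  by_contra! hac
  have hv : (⟨i, ⟨a i, lt_of_monomial_notMem i (hb i) ha⟩⟩ : PolVars m b) ∈ polarSupport b c := by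
    simpa [polarSupport] using hac
  simpa [verticesExcept] using hsub hv

theorem isAntichain_verticesExcept :
    IsAntichain (· ⊆ ·) (verticesExcept b '' {a | monomial a (1 : K) ∉ I}) := by
  rintro _ ⟨a, -, rfl⟩ _ ⟨a', ha', rfl⟩ hne hsub
  exact hne (congrArg _ (eq_of_verticesExcept_subset
    (fun i => lt_of_monomial_notMem i (hb i) ha') hsub).symm)

theorem exists_notMem_of_mem_facesDelta {F : Finset (PolVars m b)} (hF : F ∈ facesDelta K b I)
    (i : Fin m) : ∃ j : Fin (b i), (⟨i, j⟩ : PolVars m b) ∉ F := by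
  by_contra! hrow
  refine mem_facesDelta_iff.mp hF _ (hb i) fun v hv => ?_
  obtain ⟨i', j⟩ := v
  have hj : (j : ℕ) < Finsupp.single i (b i) i' := by simpa [polarSupport] using hv
  obtain rfl : i' = i := by
    by_contra hne
    simp [Ne.symm hne] at hj
  exact hrow j

theorem exists_subset_verticesExcept {F : Finset (PolVars m b)} (hF : F ∈ facesDelta K b I) :
    ∃ a : Fin m →₀ ℕ, monomial a (1 : K) ∉ I ∧ F ⊆ verticesExcept b a := by
  have hgap : ∀ i, ∃ j : Fin (b i), (⟨i, j⟩ : PolVars m b) ∉ F ∧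
      ∀ j' < j, (⟨i, j'⟩ : PolVars m b) ∈ F := fun i => by
    obtain ⟨j, hj, hmin⟩ := wellFounded_lt.has_min {j : Fin (b i) | (⟨i, j⟩ : PolVars m b) ∉ F}
      (exists_notMem_of_mem_facesDelta hb hF i)
    exact ⟨j, hj, fun j' hj' => by_contra fun h => hmin j' h hj'⟩
  choose g hgF hgmin using hgap
  let a : Fin m →₀ ℕ := Finsupp.equivFunOnFinite.symm fun i => g i
  refine ⟨a, fun haI => mem_facesDelta_iff.mp hF a haI fun v hv => ?_, fun v hv => ?_⟩
  · obtain ⟨i, j⟩ := v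
    exact hgmin i j (Finset.mem_filter.mp hv).2
  · obtain ⟨i, j⟩ := v
    exact Finset.mem_filter.mpr ⟨Finset.mem_univ _, fun hj => hgF i (Fin.ext hj ▸ hv)⟩

end Polarization

/-- A subset `F ⊆ 𝒮` is a facet (maximal face) of `Δ(I)` if and only if there
exists a monomial `x^a ∈ Mon(S∖I)` such that `F = 𝒮 ∖ {x_{1,a_1+1}, …, x_{n,a_n+1}}`. -/
theorem statement3 {K : Type} [Field K] {n : ℕ} (b : Fin n → ℕ)
    (I : Ideal (MvPolynomial (Fin n) K)) (hI : ZeroDimData K b I) :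
    ∀ F : Finset (PolVars n b),
      IsFacetOf (facesDelta K b I) F ↔
        ∃ a : Fin n →₀ ℕ, (monomial a (1 : K)) ∉ I ∧
          F = Finset.univ.filter (fun v : PolVars n b => (v.2 : ℕ) ≠ a v.1) := by
  have hb : ∀ i, monomial (Finsupp.single i (b i)) (1 : K) ∈ I := fun i => (hI.2.2 i).2.1
  intro F
  rw [IsFacetOf.iff_mem_of_isAntichain
    (Set.image_subset_iff.mpr fun a => verticesExcept_mem_facesDelta hb)
    (fun G hG => by simpa using exists_subset_verticesExcept hb hG) (isAntichain_verticesExcept hb)]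
  simp only [Set.mem_image, Set.mem_ofPred_eq, verticesExcept, eq_comm]

end
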